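/- Let k, l ≥ 1 with k ≠ l, m = 2k+1, n = 2l+1, and 1 ≤ r ≤ mn. Let N be the number of equivalence classes (orbits) of the set of all boards with r blockers on the m×n grid under the action of {R0, H, V, R180}. Then 4·N = C((2k+1)(2l+1), r) + C(2kl+k+l, ⌊r/2⌋) + Σ_{t=0}^{r} (if 2 ∣ (r−t) then C(2k+1, t)·C(2kl+l, (r−t)/2) else 0) + Σ_{t=0}^{r} (if 2 ∣ (r−t) then C(2l+1, t)·C(2kl+k, (r−t)/2) else 0). -/
import Mathlib

/-- The symmetry group `{R0, H, V, R180}` of a non-square `m × n` rectangle,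
as permutations of `Fin m × Fin n` (`Fin.rev i = m-1-i` resp. `n-1-j`). -/
def RectG (m n : ℕ) : Set ((Fin m × Fin n) → (Fin m × Fin n)) :=
  { fun p => p,                    -- R0
    fun p => (p.1.rev, p.2),       -- H
    fun p => (p.1, p.2.rev),       -- V
    fun p => (p.1.rev, p.2.rev) }  -- R180

/-- The orbit of a board `B` under a set of symmetries `Gs`. -/
def orbitOf {α : Type*} [DecidableEq α] (Gs : Set (α → α)) (B : Finset α) :
    Set (Finset α) :=
  {B' | ∃ g ∈ Gs, B.image g = B'}

open Finset

set_option linter.unusedSectionVars false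

section CountInv


lemma mem_iff_image {α : Type*} [DecidableEq α] {σ : α → α} (hσ : ∀ a, σ (σ a) = a)
    {B : Finset α} (hB : B.image σ = B) (a : α) : a ∈ B ↔ σ a ∈ B := by
  constructor
  · intro h; rw [← hB]; exact Finset.mem_image_of_mem _ h
  · intro h
    have h2 := Finset.mem_image_of_mem σ h
    rwa [hB, hσ] at h2

lemma count_inv {α : Type*} [DecidableEq α] [Fintype α] (σ : α → α) (F H : Finset α) (r : ℕ)
    (hσ : ∀ a, σ (σ a) = a)
    (hF : ∀ a ∈ F, σ a = a)
    (hHF : ∀ a ∈ H, a ∉ F)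
    (hHH : ∀ a ∈ H, σ a ∉ H)
    (hσHF : ∀ a ∈ H, σ a ∉ F)
    (hcov : ∀ a : α, a ∈ F ∨ a ∈ H ∨ σ a ∈ H) :
    ((Finset.univ.powersetCard r).filter (fun B => B.image σ = B)).card
      = ∑ t ∈ Finset.range (r+1),
          if 2 ∣ (r - t) then F.card.choose t * H.card.choose ((r-t)/2) else 0 := by
  have hinj : Function.Injective σ := fun a b h => by
    have := congrArg σ h; rwa [hσ, hσ] at this
  set T : Finset (Finset α × Finset α) :=
    (F.powerset ×ˢ H.powerset).filter (fun q => q.1.card + 2 * q.2.card = r) with hT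
  -- disjointness helpers
  have dFH : ∀ (A Tq : Finset α), A ⊆ F → Tq ⊆ H → Disjoint A Tq := by
    intro A Tq hA hTq
    rw [Finset.disjoint_left]
    intro a ha ha'
    exact hHF a (hTq ha') (hA ha)
  have dHσ : ∀ (Tq Tq' : Finset α), Tq ⊆ H → Tq' ⊆ H → Disjoint Tq (Tq'.image σ) := by
    intro Tq Tq' hTq hTq'
    rw [Finset.disjoint_left]
    intro a ha ha'
    obtain ⟨b, hb, rfl⟩ := Finset.mem_image.1 ha'
    exact hHH b (hTq' hb) (hTq ha)
  have dFσ : ∀ (A Tq : Finset α), A ⊆ F → Tq ⊆ H → Disjoint A (Tq.image σ) := by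
    intro A Tq hA hTq
    rw [Finset.disjoint_left]
    intro a ha ha'
    obtain ⟨b, hb, rfl⟩ := Finset.mem_image.1 ha'
    exact hσHF b (hTq hb) (hA ha)
  have hdecomp : ∀ B : Finset α, B.image σ = B → (B ∩ F) ∪ (B ∩ H) ∪ (B ∩ H).image σ = B := by
    intro B hB
    ext a
    simp only [Finset.mem_union, Finset.mem_inter, Finset.mem_image]
    constructor
    · rintro ((⟨h, _⟩ | ⟨h, _⟩) | ⟨b, ⟨hb, _⟩, rfl⟩)
      · exact h
      · exact h
      · exact (mem_iff_image hσ hB b).1 hb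
    · intro ha
      rcases hcov a with h | h | h
      · exact Or.inl (Or.inl ⟨ha, h⟩)
      · exact Or.inl (Or.inr ⟨ha, h⟩)
      · exact Or.inr ⟨σ a, ⟨(mem_iff_image hσ hB a).1 ha, h⟩, hσ a⟩
  have hcard3 : ∀ (A Tq : Finset α), A ⊆ F → Tq ⊆ H →
      (A ∪ Tq ∪ Tq.image σ).card = A.card + 2 * Tq.card := by
    intro A Tq hA hTq
    rw [Finset.card_union_of_disjoint, Finset.card_union_of_disjoint (dFH A Tq hA hTq),
      Finset.card_image_of_injective _ hinj]
    · ring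
    · rw [Finset.disjoint_union_left]
      exact ⟨dFσ A Tq hA hTq, dHσ Tq Tq hTq hTq⟩
  have step1 : ((Finset.univ.powersetCard r).filter (fun B => B.image σ = B)).card = T.card := by
    apply Finset.card_bij' (fun B _ => (B ∩ F, B ∩ H))
      (fun q _ => q.1 ∪ q.2 ∪ q.2.image σ)
    · intro B hB
      rw [Finset.mem_filter, Finset.mem_powersetCard_univ] at hB
      obtain ⟨hBr, hBσ⟩ := hB
      rw [hT, Finset.mem_filter, Finset.mem_product]
      refine ⟨⟨Finset.mem_powerset.2 Finset.inter_subset_right,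
        Finset.mem_powerset.2 Finset.inter_subset_right⟩, ?_⟩
      have := hcard3 (B ∩ F) (B ∩ H) Finset.inter_subset_right Finset.inter_subset_right
      rw [hdecomp B hBσ] at this
      show (B ∩ F).card + 2 * (B ∩ H).card = r
      omega
    · intro q hq
      rw [hT, Finset.mem_filter, Finset.mem_product, Finset.mem_powerset, Finset.mem_powerset] at hq
      obtain ⟨⟨hA, hTq⟩, hc⟩ := hq
      rw [Finset.mem_filter, Finset.mem_powersetCard_univ]
      constructor
      · rw [hcard3 q.1 q.2 hA hTq]; exact hc
      · rw [Finset.image_union, Finset.image_union, Finset.image_image]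
        have e1 : q.1.image σ = q.1 := by
          rw [show q.1.image σ = q.1.image id from Finset.image_congr fun a ha => hF a (hA ha),
            Finset.image_id]
        have e2 : q.2.image (σ ∘ σ) = q.2 := by
          rw [show q.2.image (σ ∘ σ) = q.2.image id from Finset.image_congr fun a _ => hσ a,
            Finset.image_id]
        rw [e1, e2]
        ext a
        simp only [Finset.mem_union]
        tauto
    · intro B hB
      rw [Finset.mem_filter] at hB
      exact hdecomp B hB.2
    · intro q hq
      rw [hT, Finset.mem_filter, Finset.mem_product, Finset.mem_powerset, Finset.mem_powerset] at hq
      obtain ⟨⟨hA, hTq⟩, _⟩ := hq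
      have h1 : (q.1 ∪ q.2 ∪ q.2.image σ) ∩ F = q.1 := by
        ext a
        simp only [Finset.mem_inter, Finset.mem_union, Finset.mem_image]
        constructor
        · rintro ⟨(h | h) | ⟨b, hb, rfl⟩, haF⟩
          · exact h
          · exact absurd haF (hHF a (hTq h))
          · exact absurd haF (hσHF b (hTq hb))
        · intro h; exact ⟨Or.inl (Or.inl h), hA h⟩
      have h2 : (q.1 ∪ q.2 ∪ q.2.image σ) ∩ H = q.2 := by
        ext a
        simp only [Finset.mem_inter, Finset.mem_union, Finset.mem_image]
        constructor
        · rintro ⟨(h | h) | ⟨b, hb, rfl⟩, haH⟩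
          · exact absurd (hA h) (hHF a haH)
          · exact h
          · exact absurd haH (hHH b (hTq hb))
        · intro h; exact ⟨Or.inl (Or.inr h), hTq h⟩
      rw [Prod.ext_iff]
      exact ⟨h1, h2⟩
  rw [step1]
  have hmapsto : ∀ q ∈ T, q.1.card ∈ Finset.range (r+1) := by
    intro q hq
    rw [hT, Finset.mem_filter] at hq
    rw [Finset.mem_range]
    omega
  rw [Finset.card_eq_sum_card_fiberwise hmapsto]
  apply Finset.sum_congr rfl
  intro t ht
  rw [Finset.mem_range] at ht
  by_cases hpar : 2 ∣ (r - t)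
  · rw [if_pos hpar]
    have : T.filter (fun q => q.1.card = t) = F.powersetCard t ×ˢ H.powersetCard ((r-t)/2) := by
      ext q
      rw [hT, Finset.mem_filter, Finset.mem_filter, Finset.mem_product, Finset.mem_product,
        Finset.mem_powerset, Finset.mem_powerset, Finset.mem_powersetCard, Finset.mem_powersetCard]
      constructor
      · rintro ⟨⟨⟨hA, hTq⟩, hc⟩, hct⟩
        exact ⟨⟨hA, hct⟩, ⟨hTq, by omega⟩⟩
      · rintro ⟨⟨hA, hct⟩, ⟨hTq, hcq⟩⟩
        refine ⟨⟨⟨hA, hTq⟩, ?_⟩, hct⟩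
        omega
    rw [this, Finset.card_product, Finset.card_powersetCard, Finset.card_powersetCard]
  · rw [if_neg hpar]
    have : T.filter (fun q => q.1.card = t) = ∅ := by
      rw [Finset.eq_empty_iff_forall_notMem]
      intro q hq
      rw [hT, Finset.mem_filter, Finset.mem_filter] at hq
      omega
    rw [this, Finset.card_empty]

end CountInv

section Burnside


variable {α : Type*} [DecidableEq α]

def orb4 (g1 g2 g3 : α → α) (B : Finset α) : Finset (Finset α) :=
  {B, B.image g1, B.image g2, B.image g3}

def stab4 (g1 g2 g3 : α → α) (B : Finset α) : ℕ :=
  (if B.image g1 = B then 1 else 0) + (if B.image g2 = B then 1 else 0)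
    + (if B.image g3 = B then 1 else 0) + 1

lemma image_comp_eq {f g h : α → α} (hyp : ∀ a, f (g a) = h a) (B : Finset α) :
    (B.image g).image f = B.image h := by
  rw [Finset.image_image]
  exact Finset.image_congr fun a _ => hyp a

lemma image_comp_self {f g : α → α} (hyp : ∀ a, f (g a) = a) (B : Finset α) :
    (B.image g).image f = B := by
  rw [Finset.image_image,
    show B.image (f ∘ g) = B.image id from Finset.image_congr fun a _ => hyp a, Finset.image_id]

section Klein

variable (g1 g2 g3 : α → α)
variable (h11 : ∀ a, g1 (g1 a) = a) (h22 : ∀ a, g2 (g2 a) = a) (h33 : ∀ a, g3 (g3 a) = a)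
variable (h21 : ∀ a, g2 (g1 a) = g3 a) (h12 : ∀ a, g1 (g2 a) = g3 a)
variable (h31 : ∀ a, g3 (g1 a) = g2 a) (h13 : ∀ a, g1 (g3 a) = g2 a)
variable (h32 : ∀ a, g3 (g2 a) = g1 a) (h23 : ∀ a, g2 (g3 a) = g1 a)

include h11 h22 h33 h21 h12 h31 h13 h32 h23 in
lemma orb4_sum (B : Finset α) :
    ∑ C ∈ orb4 g1 g2 g3 B, stab4 g1 g2 g3 C = 4 := by
  have e11 : (B.image g1).image g1 = B := image_comp_self h11 B
  have e21 : (B.image g1).image g2 = B.image g3 := image_comp_eq h21 B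
  have e31 : (B.image g1).image g3 = B.image g2 := image_comp_eq h31 B
  have e12 : (B.image g2).image g1 = B.image g3 := image_comp_eq h12 B
  have e22 : (B.image g2).image g2 = B := image_comp_self h22 B
  have e32 : (B.image g2).image g3 = B.image g1 := image_comp_eq h32 B
  have e13 : (B.image g3).image g1 = B.image g2 := image_comp_eq h13 B
  have e23 : (B.image g3).image g2 = B.image g1 := image_comp_eq h23 B
  have e33 : (B.image g3).image g3 = B := image_comp_self h33 B
  by_cases b1 : B.image g1 = B <;> by_cases b2 : B.image g2 = B <;> by_cases b3 : B.image g3 = B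
  · -- TTT
    have horb : orb4 g1 g2 g3 B = {B} := by
      unfold orb4; rw [b1, b2, b3]; ext x; simp
    rw [horb, Finset.sum_singleton]
    simp [stab4, b1, b2, b3]
  · -- TTF: contradiction
    exact absurd (by rw [← e21, b1, b2]) b3
  · -- TFT: contradiction
    exact absurd (by rw [← e13, b3, b1]) b2
  · -- TFF
    have hB3B2 : B.image g3 = B.image g2 := by rw [← e21, b1]
    have horb : orb4 g1 g2 g3 B = {B, B.image g2} := by
      unfold orb4; rw [b1, hB3B2]; ext x; simp only [Finset.mem_insert, Finset.mem_singleton]; tauto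
    rw [horb, Finset.sum_pair (Ne.symm b2)]
    have hne : B ≠ B.image g2 := fun h => b2 h.symm
    have s1 : stab4 g1 g2 g3 B = 2 := by
      simp [stab4, b1, b2, b3]
    have s2 : stab4 g1 g2 g3 (B.image g2) = 2 := by
      simp only [stab4, e12, e22, e32, b1, hB3B2]
      simp [hne]
    rw [s1, s2]
  · -- FTT: contradiction
    exact absurd (by rw [← e32, b2, b3]) b1
  · -- FTF
    have hB3B1 : B.image g3 = B.image g1 := by rw [← e12, b2]
    have horb : orb4 g1 g2 g3 B = {B, B.image g1} := by
      unfold orb4; rw [b2, hB3B1]; ext x; simp only [Finset.mem_insert, Finset.mem_singleton]; tauto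
    rw [horb, Finset.sum_pair (Ne.symm b1)]
    have hne : B ≠ B.image g1 := fun h => b1 h.symm
    have s1 : stab4 g1 g2 g3 B = 2 := by
      simp [stab4, b1, b2, b3]
    have s2 : stab4 g1 g2 g3 (B.image g1) = 2 := by
      simp only [stab4, e11, e21, e31, b2, hB3B1]
      simp [hne]
    rw [s1, s2]
  · -- FFT
    have hB2B1 : B.image g2 = B.image g1 := by rw [← e13, b3]
    have horb : orb4 g1 g2 g3 B = {B, B.image g1} := by
      unfold orb4; rw [b3, hB2B1]; ext x; simp only [Finset.mem_insert, Finset.mem_singleton]; tauto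
    rw [horb, Finset.sum_pair (Ne.symm b1)]
    have hne : B ≠ B.image g1 := fun h => b1 h.symm
    have s1 : stab4 g1 g2 g3 B = 2 := by
      simp [stab4, b1, b2, b3]
    have s2 : stab4 g1 g2 g3 (B.image g1) = 2 := by
      simp only [stab4, e11, e21, e31, b3, hB2B1]
      simp [hne]
    rw [s1, s2]
  · -- FFF: all distinct
    have d12 : B.image g1 ≠ B.image g2 := fun h => b3 (by rw [← e21, h, e22])
    have d13 : B.image g1 ≠ B.image g3 := fun h => b2 (by rw [← e31, h, e33])
    have d23 : B.image g2 ≠ B.image g3 := fun h => b1 (by rw [← e32, h, e33])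
    unfold orb4
    rw [Finset.sum_insert (by simp [Ne.symm b1, Ne.symm b2, Ne.symm b3]),
      Finset.sum_insert (by simp [d12, d13]),
      Finset.sum_insert (by simp [d23]), Finset.sum_singleton]
    have s0 : stab4 g1 g2 g3 B = 1 := by
      simp [stab4, b1, b2, b3]
    have s1 : stab4 g1 g2 g3 (B.image g1) = 1 := by
      simp only [stab4, e11, e21, e31]
      simp [Ne.symm b1, Ne.symm d13, Ne.symm d12]
    have s2 : stab4 g1 g2 g3 (B.image g2) = 1 := by
      simp only [stab4, e12, e22, e32]
      simp [Ne.symm d23, Ne.symm b2, d12]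
    have s3 : stab4 g1 g2 g3 (B.image g3) = 1 := by
      simp only [stab4, e13, e23, e33]
      simp [d23, d13, Ne.symm b3]
    rw [s0, s1, s2, s3]
    norm_num

include h11 h22 h33 h21 h12 h31 h13 h32 h23 in
lemma orb4_image1 (B : Finset α) : orb4 g1 g2 g3 (B.image g1) = orb4 g1 g2 g3 B := by
  unfold orb4
  rw [image_comp_self h11, image_comp_eq h21, image_comp_eq h31]
  ext x; simp only [Finset.mem_insert, Finset.mem_singleton]; tauto

include h11 h22 h33 h21 h12 h31 h13 h32 h23 in
lemma orb4_image2 (B : Finset α) : orb4 g1 g2 g3 (B.image g2) = orb4 g1 g2 g3 B := by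
  unfold orb4
  rw [image_comp_eq h12, image_comp_self h22, image_comp_eq h32]
  ext x; simp only [Finset.mem_insert, Finset.mem_singleton]; tauto

include h11 h22 h33 h21 h12 h31 h13 h32 h23 in
lemma orb4_image3 (B : Finset α) : orb4 g1 g2 g3 (B.image g3) = orb4 g1 g2 g3 B := by
  unfold orb4
  rw [image_comp_eq h13, image_comp_eq h23, image_comp_self h33]
  ext x; simp only [Finset.mem_insert, Finset.mem_singleton]; tauto

include h11 h22 h33 h21 h12 h31 h13 h32 h23 in
lemma burnside4 [Fintype α] (r : ℕ)
    (hi1 : Function.Injective g1) (hi2 : Function.Injective g2)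
    (hi3 : Function.Injective g3) :
    4 * ((Finset.univ.powersetCard r).image (orb4 g1 g2 g3)).card
      = ∑ B ∈ Finset.univ.powersetCard r, stab4 g1 g2 g3 B := by
  classical
  set X := (Finset.univ : Finset α).powersetCard r with hX
  have hmaps : ∀ B ∈ X, orb4 g1 g2 g3 B ∈ X.image (orb4 g1 g2 g3) :=
    fun B hB => Finset.mem_image_of_mem _ hB
  rw [← Finset.sum_fiberwise_of_maps_to hmaps (stab4 g1 g2 g3)]
  have key : ∀ O ∈ X.image (orb4 g1 g2 g3),
      (∑ B ∈ X.filter (fun B => orb4 g1 g2 g3 B = O), stab4 g1 g2 g3 B) = 4 := by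
    intro O hO
    obtain ⟨B0, hB0X, rfl⟩ := Finset.mem_image.1 hO
    have hfilter : X.filter (fun B => orb4 g1 g2 g3 B = orb4 g1 g2 g3 B0)
        = orb4 g1 g2 g3 B0 := ?_
    · rw [hfilter]
      exact orb4_sum g1 g2 g3 h11 h22 h33 h21 h12 h31 h13 h32 h23 B0
    have hXmem : ∀ B' ∈ orb4 g1 g2 g3 B0, B' ∈ X := by
      intro B' hB'
      rw [hX, Finset.mem_powersetCard_univ] at hB0X ⊢
      unfold orb4 at hB'
      simp only [Finset.mem_insert, Finset.mem_singleton] at hB'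
      rcases hB' with rfl | rfl | rfl | rfl
      · exact hB0X
      · rw [Finset.card_image_of_injective _ hi1]; exact hB0X
      · rw [Finset.card_image_of_injective _ hi2]; exact hB0X
      · rw [Finset.card_image_of_injective _ hi3]; exact hB0X
    have horbeq : ∀ B' ∈ orb4 g1 g2 g3 B0, orb4 g1 g2 g3 B' = orb4 g1 g2 g3 B0 := by
      intro B' hB'
      unfold orb4 at hB'
      simp only [Finset.mem_insert, Finset.mem_singleton] at hB'
      rcases hB' with rfl | rfl | rfl | rfl
      · rfl
      · exact orb4_image1 g1 g2 g3 h11 h22 h33 h21 h12 h31 h13 h32 h23 B0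
      · exact orb4_image2 g1 g2 g3 h11 h22 h33 h21 h12 h31 h13 h32 h23 B0
      · exact orb4_image3 g1 g2 g3 h11 h22 h33 h21 h12 h31 h13 h32 h23 B0
    ext B'
    rw [Finset.mem_filter]
    constructor
    · rintro ⟨_, h⟩
      rw [← h]
      exact Finset.mem_insert_self _ _
    · intro h
      exact ⟨hXmem B' h, horbeq B' h⟩
  rw [Finset.sum_congr rfl key, Finset.sum_const, smul_eq_mul, mul_comm]

end Klein

end Burnside



lemma sum_choose_one (P r : ℕ) (hr : 1 ≤ r) :
    (∑ t ∈ Finset.range (r+1),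
      if 2 ∣ (r - t) then (Nat.choose 1 t) * P.choose ((r-t)/2) else 0) = P.choose (r/2) := by
  rw [Finset.sum_eq_single_of_mem (r % 2) (by rw [Finset.mem_range]; omega)]
  · rw [if_pos (by omega)]
    have h1 : Nat.choose 1 (r % 2) = 1 := by
      rcases Nat.mod_two_eq_zero_or_one r with h | h <;> simp [h]
    have h2 : (r - r % 2) / 2 = r / 2 := by omega
    rw [h1, h2, one_mul]
  · intro t ht hne
    rw [Finset.mem_range] at ht
    by_cases h2t : 2 ≤ t
    · rw [Nat.choose_eq_zero_of_lt (by omega), zero_mul, ite_self]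
    · rw [if_neg (by omega)]

-- val-< sets in Fin
def finLt (N d : ℕ) (h : d ≤ N) : Finset (Fin N) :=
  (Finset.range d).attachFin (fun m hm => lt_of_lt_of_le (Finset.mem_range.1 hm) h)

lemma mem_finLt {N d : ℕ} (h : d ≤ N) (a : Fin N) : a ∈ finLt N d h ↔ (a : ℕ) < d := by
  rw [finLt, Finset.mem_attachFin, Finset.mem_range]

lemma card_finLt {N d : ℕ} (h : d ≤ N) : (finLt N d h).card = d := by
  rw [finLt, Finset.card_attachFin, Finset.card_range]


/-- Burnside count, non-square boards with odd side lengths: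
with `N` the number of orbits of boards with `r` blockers on the
`(2k+1) × (2l+1)` grid under `{R0, H, V, R180}`,
`4N = C((2k+1)(2l+1),r) + C(2kl+k+l,⌊r/2⌋)
      + Σ_{t=0}^{r} [2∣(r−t)]·C(2k+1,t)·C(2kl+l,(r−t)/2)
      + Σ_{t=0}^{r} [2∣(r−t)]·C(2l+1,t)·C(2kl+k,(r−t)/2)`. -/
theorem stmt_13 (k l r : ℕ) (hk : 1 ≤ k) (hl : 1 ≤ l) (hkl : k ≠ l)
    (hr1 : 1 ≤ r) (hr2 : r ≤ (2*k+1) * (2*l+1)) :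
    4 * Set.ncard {O : Set (Finset (Fin (2*k+1) × Fin (2*l+1))) |
        ∃ B : Finset (Fin (2*k+1) × Fin (2*l+1)),
          B.card = r ∧ O = orbitOf (RectG (2*k+1) (2*l+1)) B} =
      Nat.choose ((2*k+1) * (2*l+1)) r
      + Nat.choose (2*k*l + k + l) (r / 2)
      + ∑ t ∈ Finset.range (r + 1),
          (if 2 ∣ (r - t) then
            Nat.choose (2*k+1) t * Nat.choose (2*k*l + l) ((r - t) / 2)
          else 0)
      + ∑ t ∈ Finset.range (r + 1),
          (if 2 ∣ (r - t) then
            Nat.choose (2*l+1) t * Nat.choose (2*k*l + k) ((r - t) / 2)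
          else 0) := by
  classical
  set m := 2*k+1 with hm
  set n := 2*l+1 with hn
  -- the three nontrivial symmetries
  set g1 : Fin m × Fin n → Fin m × Fin n := fun p => (p.1.rev, p.2) with hg1
  set g2 : Fin m × Fin n → Fin m × Fin n := fun p => (p.1, p.2.rev) with hg2
  set g3 : Fin m × Fin n → Fin m × Fin n := fun p => (p.1.rev, p.2.rev) with hg3
  -- Klein relations
  have h11 : ∀ a, g1 (g1 a) = a := fun a => by simp [hg1, Fin.rev_rev]
  have h22 : ∀ a, g2 (g2 a) = a := fun a => by simp [hg2, Fin.rev_rev]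
  have h33 : ∀ a, g3 (g3 a) = a := fun a => by simp [hg3, Fin.rev_rev]
  have h21 : ∀ a, g2 (g1 a) = g3 a := fun a => by simp [hg1, hg2, hg3]
  have h12 : ∀ a, g1 (g2 a) = g3 a := fun a => by simp [hg1, hg2, hg3]
  have h31 : ∀ a, g3 (g1 a) = g2 a := fun a => by simp [hg1, hg2, hg3, Fin.rev_rev]
  have h13 : ∀ a, g1 (g3 a) = g2 a := fun a => by simp [hg1, hg2, hg3, Fin.rev_rev]
  have h32 : ∀ a, g3 (g2 a) = g1 a := fun a => by simp [hg1, hg2, hg3, Fin.rev_rev]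
  have h23 : ∀ a, g2 (g3 a) = g1 a := fun a => by simp [hg1, hg2, hg3, Fin.rev_rev]
  have hi1 : Function.Injective g1 := fun a b h => by
    have := congrArg g1 h; rwa [h11, h11] at this
  have hi2 : Function.Injective g2 := fun a b h => by
    have := congrArg g2 h; rwa [h22, h22] at this
  have hi3 : Function.Injective g3 := fun a b h => by
    have := congrArg g3 h; rwa [h33, h33] at this
  set X := (Finset.univ : Finset (Fin m × Fin n)).powersetCard r with hX
  -- Step A : the orbit set is the coercion of a finset of orbits
  have horbit : ∀ B : Finset (Fin m × Fin n),
      orbitOf (RectG m n) B = (↑(orb4 g1 g2 g3 B) : Set (Finset (Fin m × Fin n))) := by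
    intro B
    ext B'
    simp only [orbitOf, RectG, Set.mem_setOf_eq, Set.mem_insert_iff,
      Set.mem_singleton_iff, Finset.mem_coe]
    unfold orb4
    simp only [Finset.mem_insert, Finset.mem_singleton]
    constructor
    · rintro ⟨g, (rfl | rfl | rfl | rfl), rfl⟩
      · left; exact Finset.image_id'
      · right; left; rfl
      · right; right; left; rfl
      · right; right; right; rfl
    · rintro (rfl | rfl | rfl | rfl)
      · exact ⟨fun p => p, Or.inl rfl, Finset.image_id'⟩
      · exact ⟨g1, Or.inr (Or.inl rfl), rfl⟩
      · exact ⟨g2, Or.inr (Or.inr (Or.inl rfl)), rfl⟩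
      · exact ⟨g3, Or.inr (Or.inr (Or.inr rfl)), rfl⟩
  have hsetA : {O : Set (Finset (Fin m × Fin n)) |
      ∃ B : Finset (Fin m × Fin n), B.card = r ∧ O = orbitOf (RectG m n) B}
      = (fun s : Finset (Finset (Fin m × Fin n)) => (↑s : Set (Finset (Fin m × Fin n))))
          '' ↑(X.image (orb4 g1 g2 g3)) := by
    ext O
    simp only [Set.mem_setOf_eq, Set.mem_image, Finset.mem_coe, Finset.mem_image, hX,
      Finset.mem_powersetCard_univ]
    constructor
    · rintro ⟨B, hB, rfl⟩
      exact ⟨orb4 g1 g2 g3 B, ⟨B, hB, rfl⟩, (horbit B).symm⟩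
    · rintro ⟨s, ⟨B, hB, rfl⟩, rfl⟩
      exact ⟨B, hB, (horbit B).symm⟩
  rw [hsetA, Set.ncard_image_of_injective _ Finset.coe_injective, Set.ncard_coe_finset]
  -- Step B : Burnside
  rw [burnside4 g1 g2 g3 h11 h22 h33 h21 h12 h31 h13 h32 h23 r hi1 hi2 hi3]
  -- Step C : decompose the sum of stabilizer counts
  have hdecomp : ∑ B ∈ X, stab4 g1 g2 g3 B
      = (X.filter (fun B => B.image g1 = B)).card
        + (X.filter (fun B => B.image g2 = B)).card
        + (X.filter (fun B => B.image g3 = B)).card + X.card := by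
    simp only [stab4]
    rw [Finset.sum_add_distrib, Finset.sum_add_distrib, Finset.sum_add_distrib,
      ← Finset.card_filter, ← Finset.card_filter, ← Finset.card_filter,
      Finset.sum_const, smul_eq_mul, mul_one]
  rw [hdecomp]
  -- cardinality of X
  have hXcard : X.card = Nat.choose ((2*k+1) * (2*l+1)) r := by
    rw [hX, Finset.card_powersetCard, Finset.card_univ]
    simp [hm, hn]
  -- ==== fix count for g1 (row flip) ====
  have hkm : k < m := by omega
  have hln : l < n := by omega
  have hfix1 : (X.filter (fun B => B.image g1 = B)).card
      = ∑ t ∈ Finset.range (r + 1),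
          (if 2 ∣ (r - t) then
            Nat.choose (2*l+1) t * Nat.choose (2*k*l + k) ((r - t) / 2) else 0) := by
    set F1 : Finset (Fin m × Fin n) := {(⟨k, hkm⟩ : Fin m)} ×ˢ Finset.univ with hF1
    set H1 : Finset (Fin m × Fin n) := (finLt m k (by omega)) ×ˢ Finset.univ with hH1
    have hmF1 : ∀ p : Fin m × Fin n, p ∈ F1 ↔ (p.1 : ℕ) = k := by
      intro p
      simp only [hF1, Finset.mem_product, Finset.mem_singleton, Finset.mem_univ, and_true,
        Fin.ext_iff]
    have hmH1 : ∀ p : Fin m × Fin n, p ∈ H1 ↔ (p.1 : ℕ) < k := by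
      intro p; simp [hH1, Finset.mem_product, mem_finLt]
    have hrev : ∀ i : Fin m, ((i.rev : Fin m) : ℕ) = m - (i + 1) := fun i => Fin.val_rev i
    have hc1 := count_inv g1 F1 H1 r h11
      (by
        intro a ha
        rw [hmF1] at ha
        have h1 : (a.1.rev : Fin m) = a.1 := by
          apply Fin.ext; rw [hrev]; omega
        rw [hg1]; exact Prod.ext h1 rfl)
      (by intro a ha; rw [hmH1] at ha; rw [hmF1]; omega)
      (by
        intro a ha
        rw [hmH1] at ha
        rw [hg1]
        intro hmem
        rw [hmH1] at hmem
        simp only at hmem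
        rw [hrev] at hmem
        omega)
      (by
        intro a ha
        rw [hmH1] at ha
        rw [hg1]
        intro hmem
        rw [hmF1] at hmem
        simp only at hmem
        rw [hrev] at hmem
        have := a.1.isLt
        omega)
      (by
        intro a
        rw [hmF1, hmH1, hmH1, hg1]
        simp only
        rw [hrev]
        have := a.1.isLt
        omega)
    have hcF1 : F1.card = 2*l+1 := by
      rw [hF1, Finset.card_product, Finset.card_singleton, Finset.card_univ]
      simp [hn]
    have hcH1 : H1.card = 2*k*l + k := by
      rw [hH1, Finset.card_product, card_finLt, Finset.card_univ]
      simp only [Fintype.card_fin, hn]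
      ring
    rw [hcF1, hcH1] at hc1
    exact hc1
  -- ==== fix count for g2 (column flip) ====
  have hfix2 : (X.filter (fun B => B.image g2 = B)).card
      = ∑ t ∈ Finset.range (r + 1),
          (if 2 ∣ (r - t) then
            Nat.choose (2*k+1) t * Nat.choose (2*k*l + l) ((r - t) / 2) else 0) := by
    set F2 : Finset (Fin m × Fin n) := Finset.univ ×ˢ {(⟨l, hln⟩ : Fin n)} with hF2
    set H2 : Finset (Fin m × Fin n) := Finset.univ ×ˢ (finLt n l (by omega)) with hH2
    have hmF2 : ∀ p : Fin m × Fin n, p ∈ F2 ↔ (p.2 : ℕ) = l := by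
      intro p
      simp only [hF2, Finset.mem_product, Finset.mem_singleton, Finset.mem_univ, true_and,
        Fin.ext_iff]
    have hmH2 : ∀ p : Fin m × Fin n, p ∈ H2 ↔ (p.2 : ℕ) < l := by
      intro p; simp [hH2, Finset.mem_product, mem_finLt]
    have hrev : ∀ j : Fin n, ((j.rev : Fin n) : ℕ) = n - (j + 1) := fun j => Fin.val_rev j
    have hc2 := count_inv g2 F2 H2 r h22
      (by
        intro a ha
        rw [hmF2] at ha
        have h1 : (a.2.rev : Fin n) = a.2 := by
          apply Fin.ext; rw [hrev]; omega
        rw [hg2]; exact Prod.ext rfl h1)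
      (by intro a ha; rw [hmH2] at ha; rw [hmF2]; omega)
      (by
        intro a ha
        rw [hmH2] at ha
        rw [hg2]
        intro hmem
        rw [hmH2] at hmem
        simp only at hmem
        rw [hrev] at hmem
        omega)
      (by
        intro a ha
        rw [hmH2] at ha
        rw [hg2]
        intro hmem
        rw [hmF2] at hmem
        simp only at hmem
        rw [hrev] at hmem
        have := a.2.isLt
        omega)
      (by
        intro a
        rw [hmF2, hmH2, hmH2, hg2]
        simp only
        rw [hrev]
        have := a.2.isLt
        omega)
    have hcF2 : F2.card = 2*k+1 := by
      rw [hF2, Finset.card_product, Finset.card_singleton, Finset.card_univ]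
      simp [hm]
    have hcH2 : H2.card = 2*k*l + l := by
      rw [hH2, Finset.card_product, card_finLt, Finset.card_univ]
      simp only [Fintype.card_fin, hm]
      ring
    rw [hcF2, hcH2] at hc2
    exact hc2
  -- ==== fix count for g3 (rotation by 180) ====
  have hfix3 : (X.filter (fun B => B.image g3 = B)).card
      = Nat.choose (2*k*l + k + l) (r / 2) := by
    set F3 : Finset (Fin m × Fin n) := {((⟨k, hkm⟩ : Fin m), (⟨l, hln⟩ : Fin n))} with hF3
    set H3 : Finset (Fin m × Fin n) :=
      ((finLt m k (by omega)) ×ˢ Finset.univ)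
        ∪ ({(⟨k, hkm⟩ : Fin m)} ×ˢ (finLt n l (by omega))) with hH3
    have hmF3 : ∀ p : Fin m × Fin n, p ∈ F3 ↔ (p.1 : ℕ) = k ∧ (p.2 : ℕ) = l := by
      intro p; simp [hF3, Prod.ext_iff, Fin.ext_iff]
    have hmH3 : ∀ p : Fin m × Fin n,
        p ∈ H3 ↔ (p.1 : ℕ) < k ∨ ((p.1 : ℕ) = k ∧ (p.2 : ℕ) < l) := by
      intro p
      simp only [hH3, Finset.mem_union, Finset.mem_product, Finset.mem_singleton,
        Finset.mem_univ, and_true, mem_finLt, Fin.ext_iff]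
    have hrevm : ∀ i : Fin m, ((i.rev : Fin m) : ℕ) = m - (i + 1) := fun i => Fin.val_rev i
    have hrevn : ∀ j : Fin n, ((j.rev : Fin n) : ℕ) = n - (j + 1) := fun j => Fin.val_rev j
    have hc3 := count_inv g3 F3 H3 r h33
      (by
        intro a ha
        rw [hmF3] at ha
        have h1 : (a.1.rev : Fin m) = a.1 := by apply Fin.ext; rw [hrevm]; omega
        have h2 : (a.2.rev : Fin n) = a.2 := by apply Fin.ext; rw [hrevn]; omega
        rw [hg3]; exact Prod.ext h1 h2)
      (by intro a ha; rw [hmH3] at ha; rw [hmF3]; omega)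
      (by
        intro a ha
        rw [hmH3] at ha
        rw [hg3]
        intro hmem
        rw [hmH3] at hmem
        simp only at hmem
        rw [hrevm, hrevn] at hmem
        have := a.1.isLt
        have := a.2.isLt
        omega)
      (by
        intro a ha
        rw [hmH3] at ha
        rw [hg3]
        intro hmem
        rw [hmF3] at hmem
        simp only at hmem
        rw [hrevm, hrevn] at hmem
        have := a.1.isLt
        have := a.2.isLt
        omega)
      (by
        intro a
        rw [hmF3, hmH3, hmH3, hg3]
        simp only
        rw [hrevm, hrevn]
        have := a.1.isLt
        have := a.2.isLt
        omega)
    have hcF3 : F3.card = 1 := by rw [hF3, Finset.card_singleton]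
    have hcH3 : H3.card = 2*k*l + k + l := by
      rw [hH3, Finset.card_union_of_disjoint, Finset.card_product, Finset.card_product,
        card_finLt, card_finLt, Finset.card_singleton, Finset.card_univ]
      · simp only [Fintype.card_fin, hn]
        ring
      · rw [Finset.disjoint_left]
        intro p hp hp'
        rw [Finset.mem_product, mem_finLt] at hp
        rw [Finset.mem_product, Finset.mem_singleton] at hp'
        have : (p.1 : ℕ) = k := by rw [hp'.1]
        omega
    rw [hcF3, hcH3] at hc3
    rw [hc3]
    exact sum_choose_one (2*k*l + k + l) r hr1
  rw [hfix1, hfix2, hfix3, hXcard]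
  ring
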